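/- arXiv:0912.4130 — 4 statements merged into one kernel-verified Lean document; each statement's English description precedes it below -/
import Mathlib

section
/- Let X be a compact metric space and φ : X → X a continuous locally injective surjection. Let z ∈ X with φ^{-1}(z) = {w_1,…,w_j}. Then there exist an open neighborhood U of z and pairwise disjoint open sets V_1,…,V_j with w_i ∈ V_i, such that φ^{-1}(closure U) ⊆ V_1 ∪ … ∪ V_j, the closures of the V_i are pairwise disjoint, and φ is injective on the closure of each V_i. -/
/-!
Shrink injectivity neighbourhoods of the finitely many points of the fibre `φ⁻¹(z)` to open sets
with pairwise disjoint closures, which is possible in a Hausdorff regular space. The image under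
`φ` of the complement of their union is compact and misses `z`, so some open `U ∋ z` has closure
disjoint from it; then `φ⁻¹(closure U)` lies in the union.
-/

open Set Filter Topology Function

theorem exists_isOpen_pairwise_disjoint_closure_subset {X ι : Type*} [TopologicalSpace X]
    [T3Space X] [Finite ι] {w : ι → X} (hw : Injective w) {N : ι → Set X}
    (hN : ∀ i, N i ∈ 𝓝 (w i)) :
    ∃ V : ι → Set X, (∀ i, w i ∈ V i ∧ IsOpen (V i) ∧ closure (V i) ⊆ N i) ∧
      Pairwise (Disjoint on fun i => closure (V i)) := by
  have hdisj : Pairwise (Disjoint on fun i => 𝓝 (w i)) := fun i i' hne =>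
    disjoint_nhds_nhds.2 (hw.ne hne)
  obtain ⟨V, hV, hVdisj⟩ := hdisj.exists_mem_filter_basis_of_disjoint fun i =>
    (hasBasis_opens_closure (w i)).restrict_subset (hN i)
  exact ⟨V, fun i => ⟨(hV i).1.1, (hV i).1.2, (hV i).2⟩, hVdisj⟩

theorem exists_isOpen_preimage_closure_subset {X Y : Type*} [TopologicalSpace X] [CompactSpace X]
    [TopologicalSpace Y] [T3Space Y] {f : X → Y} (hf : Continuous f) {V : Set X} (hV : IsOpen V)
    {z : Y} (hz : f ⁻¹' {z} ⊆ V) :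
    ∃ U, IsOpen U ∧ z ∈ U ∧ f ⁻¹' closure U ⊆ V := by
  have hclosed : IsClosed (f '' Vᶜ) := (hV.isClosed_compl.isCompact.image hf).isClosed
  have hz' : z ∉ f '' Vᶜ := by
    rintro ⟨x, hxV, rfl⟩
    exact hxV (hz rfl)
  obtain ⟨U, ⟨hzU, hU⟩, hUsub⟩ :=
    (hasBasis_opens_closure z).mem_iff.1 (hclosed.isOpen_compl.mem_nhds hz')
  refine ⟨U, hU, hzU, fun x hx => ?_⟩
  by_contra hxV
  exact hUsub hx ⟨x, hxV, rfl⟩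

theorem exists_separating_neighborhoods_general {X : Type*} [MetricSpace X] [CompactSpace X]
    (φ : X → X) (hcont : Continuous φ)
    (hlocinj : ∀ x : X, ∃ U ∈ nhds x, Set.InjOn φ U)
    (z : X) (j : ℕ) (w : Fin j → X) (hw : Function.Injective w)
    (hfiber : φ ⁻¹' {z} = Set.range w) :
    ∃ (U : Set X) (V : Fin j → Set X),
      IsOpen U ∧ z ∈ U ∧
      (∀ i, IsOpen (V i) ∧ w i ∈ V i) ∧
      (φ ⁻¹' (closure U) ⊆ ⋃ i, V i) ∧
      (Pairwise fun i i' => Disjoint (closure (V i)) (closure (V i'))) ∧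
      (∀ i, Set.InjOn φ (closure (V i))) := by
  choose N hN hNinj using hlocinj
  obtain ⟨V, hV, hVdisj⟩ :=
    exists_isOpen_pairwise_disjoint_closure_subset hw fun i => hN (w i)
  have hfiberV : φ ⁻¹' {z} ⊆ ⋃ i, V i := by
    rw [hfiber]
    rintro _ ⟨i, rfl⟩
    exact mem_iUnion_of_mem i (hV i).1
  obtain ⟨U, hU, hzU, hUV⟩ :=
    exists_isOpen_preimage_closure_subset hcont (isOpen_iUnion fun i => (hV i).2.1) hfiberV
  exact ⟨U, V, hU, hzU, fun i => ⟨(hV i).2.1, (hV i).1⟩, hUV, hVdisj,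
    fun i => (hNinj (w i)).mono (hV i).2.2⟩

/-- Lemma 3.6 of [Th]: separating neighborhoods of the fiber of a locally injective map. -/
theorem exists_separating_neighborhoods {X : Type*} [MetricSpace X] [CompactSpace X]
    (φ : X → X) (hcont : Continuous φ) (hsurj : Function.Surjective φ)
    (hlocinj : ∀ x : X, ∃ U ∈ nhds x, Set.InjOn φ U)
    (z : X) (j : ℕ) (w : Fin j → X) (hw : Function.Injective w)
    (hfiber : φ ⁻¹' {z} = Set.range w) :
    ∃ (U : Set X) (V : Fin j → Set X),
      IsOpen U ∧ z ∈ U ∧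
      (∀ i, IsOpen (V i) ∧ w i ∈ V i) ∧
      (φ ⁻¹' (closure U) ⊆ ⋃ i, V i) ∧
      (Pairwise fun i i' => Disjoint (closure (V i)) (closure (V i'))) ∧
      (∀ i, Set.InjOn φ (closure (V i))) :=
  exists_separating_neighborhoods_general φ hcont hlocinj z j w hw hfiber
end

section
/- Let X be a compact metric space, φ : X → X continuous surjective and locally injective with finite fibers, and F : X → ℝ a continuous function with A_F = lim_k (1/k) inf_x ∑_{j<k} F(φ^j x) > 0. Then for any t ≥ 0 the operator L_{-tF} on C(X) defined by L_{-tF}(g)(x) = ∑_{y ∈ φ^{-1}(x)} e^{-tF(y)} g(y) satisfies lim_{t→∞} ρ(L_{-tF}) = 0, where ρ denotes spectral radius. -/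
/-!
Iterating the transfer operator gives
`L_{-tF}^n g (x) = ∑_{φ^n z = x} exp (-t S_n F z) g z` with `S_n F` the Birkhoff sum. Since
`A_F > 0`, some Birkhoff sum is bounded below by `c > 0`, so for `t ≥ 0` this yields
`‖L_{-tF}^n‖ ≤ exp (-t c) ‖L_0^n 1‖`. As `ρ(T) ≤ ‖T^n‖^{1/n}` for every `n`, the spectral
radius is at most `(exp (-t c) ‖L_0^n 1‖)^{1/n}`, which tends to `0`.
-/

open Filter Function Real

section

variable {X : Type*}

theorem Set.Finite.tsum_subtype_eq_sum {M : Type*} [AddCommMonoid M] [TopologicalSpace M]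
    {s : Set X} (hs : s.Finite) (f : X → M) : ∑' x : s, f x = ∑ x ∈ hs.toFinset, f x :=
  ((Equiv.setCongr hs.coe_toFinset).tsum_eq (f ∘ (↑))).symm.trans (Finset.tsum_subtype' _ f)

theorem Set.Finite.preimage_iterate {φ : X → X} (hfin : ∀ x, (φ ⁻¹' {x}).Finite) (n : ℕ)
    {s : Set X} (hs : s.Finite) : (φ^[n] ⁻¹' s).Finite := by
  induction n generalizing s with
  | zero => simpa
  | succ n ih => rw [iterate_succ, Set.preimage_comp]; exact (ih hs).preimage' fun y _ => hfin y

theorem birkhoffSum_mul_left {R : Type*} [NonUnitalNonAssocSemiring R] (φ : X → X) (g : X → R)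
    (a : R) (n : ℕ) (x : X) : birkhoffSum φ (fun y => a * g y) n x = a * birkhoffSum φ g n x :=
  (Finset.mul_sum _ _ _).symm

theorem exists_pos_le_birkhoffSum {φ : X → X} {F : X → ℝ} {AF : ℝ}
    (hAF : Tendsto (fun k : ℕ => sInf (Set.range (birkhoffSum φ F k)) / k) atTop (nhds AF))
    (hpos : 0 < AF) : ∃ n : ℕ, ∃ c > 0, ∀ x, c ≤ birkhoffSum φ F (n + 1) x := by
  obtain ⟨k, hk⟩ := (hAF.eventually (Ioi_mem_nhds hpos)).exists
  obtain _ | n := k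
  · simp at hk -- `a / 0 = 0`
  have hinf : 0 < sInf (Set.range (birkhoffSum φ F (n + 1))) :=
    (div_pos_iff_of_pos_right (by positivity)).mp hk
  -- `sInf` of a set unbounded below is `0`, so positivity forces boundedness.
  have hbdd : BddBelow (Set.range (birkhoffSum φ F (n + 1))) := by
    by_contra h
    exact hinf.ne' (Real.sInf_of_not_bddBelow h)
  exact ⟨n, _, hinf, fun x => csInf_le hbdd ⟨x, rfl⟩⟩

noncomputable def iterateFiber {φ : X → X} (hfin : ∀ x, (φ ⁻¹' {x}).Finite) (n : ℕ) (x : X) :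
    Finset X :=
  ((Set.finite_singleton x).preimage_iterate hfin n).toFinset

@[simp]
theorem mem_iterateFiber {φ : X → X} (hfin : ∀ x, (φ ⁻¹' {x}).Finite) {n : ℕ} {x z : X} :
    z ∈ iterateFiber hfin n x ↔ φ^[n] z = x := by
  simp [iterateFiber]

variable [TopologicalSpace X] [CompactSpace X]

def IsTransferOperator (φ : X → X) (w : X → ℝ) (L : C(X, ℝ) →L[ℝ] C(X, ℝ)) : Prop :=
  ∀ (g : C(X, ℝ)) (x : X), L g x = ∑' y : (φ ⁻¹' {x} : Set X), exp (w y) * g y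

theorem IsTransferOperator.pow_apply {φ : X → X} (hfin : ∀ x, (φ ⁻¹' {x}).Finite) {w : X → ℝ}
    {L : C(X, ℝ) →L[ℝ] C(X, ℝ)} (hL : IsTransferOperator φ w L) (n : ℕ) (g : C(X, ℝ)) (x : X) :
    (L ^ n) g x = ∑ z ∈ iterateFiber hfin n x, exp (birkhoffSum φ w n z) * g z := by
  classical
  induction n generalizing x with
  | zero =>
    have : iterateFiber hfin 0 x = {x} := by ext; simp
    simp [this]
  | succ n ih =>
    have hmaps : ∀ z ∈ iterateFiber hfin (n + 1) x, φ^[n] z ∈ (hfin x).toFinset := by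
      intro z hz
      simpa [iterate_succ_apply'] using hz
    rw [pow_succ', mul_apply_eq_comp, hL,
      (hfin x).tsum_subtype_eq_sum fun y => exp (w y) * (L ^ n) g y,
      ← Finset.sum_fiberwise_of_maps_to hmaps]
    refine Finset.sum_congr rfl fun y hy => ?_
    have hfiber : {z ∈ iterateFiber hfin (n + 1) x | φ^[n] z = y} = iterateFiber hfin n y := by
      ext z
      rw [Set.Finite.mem_toFinset] at hy
      simp only [Finset.mem_filter, mem_iterateFiber, iterate_succ_apply']
      exact ⟨And.right, fun h => ⟨h ▸ hy, h⟩⟩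
    rw [hfiber, ih, Finset.mul_sum]
    refine Finset.sum_congr rfl fun z hz => ?_
    rw [birkhoffSum_succ, (mem_iterateFiber hfin).mp hz, add_comm, exp_add, mul_assoc]

theorem IsTransferOperator.norm_pow_le {φ : X → X} (hfin : ∀ x, (φ ⁻¹' {x}).Finite)
    {w w' : X → ℝ} {L L' : C(X, ℝ) →L[ℝ] C(X, ℝ)} (hL : IsTransferOperator φ w L)
    (hL' : IsTransferOperator φ w' L') (n : ℕ) {c : ℝ}
    (hc : ∀ z, birkhoffSum φ w n z ≤ c + birkhoffSum φ w' n z) :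
    ‖L ^ n‖ ≤ exp c * ‖(L' ^ n) 1‖ := by
  refine ContinuousLinearMap.opNorm_le_bound _ (by positivity) fun g => ?_
  refine (ContinuousMap.norm_le _ (by positivity)).mpr fun x => ?_
  have hpointwise : ∀ z, ‖exp (birkhoffSum φ w n z) * g z‖ ≤
      exp c * ‖g‖ * (exp (birkhoffSum φ w' n z) * (1 : C(X, ℝ)) z) := fun z => by
    rw [norm_mul, norm_of_nonneg (exp_pos _).le, ContinuousMap.one_apply, mul_one,
      mul_right_comm, ← exp_add]
    exact mul_le_mul (exp_le_exp.mpr (hc z)) (g.norm_coe_le_norm z) (norm_nonneg _) (by positivity)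
  calc ‖(L ^ n) g x‖
      ≤ ∑ z ∈ iterateFiber hfin n x, ‖exp (birkhoffSum φ w n z) * g z‖ := by
        rw [hL.pow_apply hfin]; exact norm_sum_le _ _
    _ ≤ exp c * ‖g‖ * (L' ^ n) 1 x := by
        rw [hL'.pow_apply hfin, Finset.mul_sum]; exact Finset.sum_le_sum fun z _ => hpointwise z
    _ ≤ exp c * ‖g‖ * ‖(L' ^ n) 1‖ := by
        gcongr; exact (le_abs_self _).trans (((L' ^ n) 1).norm_coe_le_norm x)
    _ = exp c * ‖(L' ^ n) 1‖ * ‖g‖ := by ring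

theorem ContinuousLinearMap.spectralRadius_toReal_le {𝕜 E : Type*} [NontriviallyNormedField 𝕜]
    [NormedAddCommGroup E] [NormedSpace 𝕜 E] [CompleteSpace E] (T : E →L[𝕜] E) (n : ℕ) :
    (spectralRadius 𝕜 T).toReal ≤ ‖T ^ (n + 1)‖ ^ (1 / (n + 1 : ℝ)) := by
  have hone : (‖(1 : E →L[𝕜] E)‖₊ : ENNReal) ^ (1 / (n + 1 : ℝ)) ≤ 1 :=
    ENNReal.rpow_le_one (by exact_mod_cast norm_id_le) (by positivity)
  have hle : spectralRadius 𝕜 T ≤ (‖T ^ (n + 1)‖₊ : ENNReal) ^ (1 / (n + 1 : ℝ)) :=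
    (spectrum.spectralRadius_le_pow_nnnorm_pow_one_div 𝕜 T n).trans (mul_le_of_le_one_right' hone)
  calc (spectralRadius 𝕜 T).toReal
      ≤ ((‖T ^ (n + 1)‖₊ : ENNReal) ^ (1 / (n + 1 : ℝ))).toReal :=
        ENNReal.toReal_mono (ENNReal.rpow_ne_top_of_nonneg (by positivity) ENNReal.coe_ne_top) hle
    _ = ‖T ^ (n + 1)‖ ^ (1 / (n + 1 : ℝ)) := by rw [← ENNReal.toReal_rpow]; rfl

theorem tendsto_rpow_exp_neg_mul_mul_atTop {c p : ℝ} (hc : 0 < c) (hp : 0 < p) (C : ℝ) :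
    Tendsto (fun t => (exp (-t * c) * C) ^ p) atTop (nhds 0) := by
  have hexp : Tendsto (fun t => exp (-t * c) * C) atTop (nhds 0) := by
    simpa using (tendsto_exp_atBot.comp
      (tendsto_neg_atTop_atBot.atBot_mul_const hc)).mul_const C
  have := (continuousAt_rpow_const 0 p (Or.inr hp.le)).tendsto.comp hexp
  rwa [zero_rpow hp.ne'] at this

end

theorem spectralRadius_transfer_tendsto_zero_general {X : Type*} [MetricSpace X] [CompactSpace X]
    (φ : X → X)
    (hfin : ∀ x : X, (φ ⁻¹' {x}).Finite)
    (F : C(X, ℝ))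
    (AF : ℝ)
    (hAF : Tendsto
      (fun k : ℕ =>
        sInf (Set.range fun x => ∑ j ∈ Finset.range k, F (φ^[j] x)) / k)
      atTop (nhds AF))
    (hpos : 0 < AF)
    (L : ℝ → (C(X, ℝ) →L[ℝ] C(X, ℝ)))
    (hL : ∀ (t : ℝ) (g : C(X, ℝ)) (x : X),
      L t g x = ∑' y : (φ ⁻¹' {x} : Set X), Real.exp (-t * F y) * g y) :
    Tendsto (fun t => (spectralRadius ℝ (L t)).toReal) atTop (nhds 0) := by
  obtain ⟨n, c, hc, hcS⟩ := exists_pos_le_birkhoffSum hAF hpos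
  have hnorm : ∀ t ≥ 0, ‖L t ^ (n + 1)‖ ≤ exp (-t * c) * ‖(L 0 ^ (n + 1)) 1‖ := fun t ht =>
    IsTransferOperator.norm_pow_le hfin (w := fun y => -t * F y) (w' := fun y => -0 * F y)
      (hL t) (hL 0) (n + 1) fun z => by
      rw [birkhoffSum_mul_left, birkhoffSum_mul_left, neg_zero, zero_mul, add_zero]
      exact mul_le_mul_of_nonpos_left (hcS z) (neg_nonpos.mpr ht)
  refine squeeze_zero' (Eventually.of_forall fun t => ENNReal.toReal_nonneg) ?_
    (tendsto_rpow_exp_neg_mul_mul_atTop (p := 1 / (n + 1 : ℝ)) hc (by positivity)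
      ‖(L 0 ^ (n + 1)) 1‖)
  filter_upwards [eventually_ge_atTop 0] with t ht
  exact (ContinuousLinearMap.spectralRadius_toReal_le (L t) n).trans
    (rpow_le_rpow (norm_nonneg _) (hnorm t ht) (by positivity))

/-- If the asymptotic minimal Birkhoff average `A_F` of `F` is strictly positive, then the
spectral radius of the transfer operator `L_{-tF}` tends to `0` as `t → ∞`. -/
theorem spectralRadius_transfer_tendsto_zero {X : Type*} [MetricSpace X] [CompactSpace X]
    [Nonempty X] (φ : X → X) (hcont : Continuous φ) (hsurj : Function.Surjective φ)
    (hlocinj : ∀ x : X, ∃ U ∈ nhds x, Set.InjOn φ U)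
    (hfin : ∀ x : X, (φ ⁻¹' {x}).Finite)
    (F : C(X, ℝ))
    (AF : ℝ)
    (hAF : Tendsto
      (fun k : ℕ =>
        sInf (Set.range fun x => ∑ j ∈ Finset.range k, F (φ^[j] x)) / k)
      atTop (nhds AF))
    (hpos : 0 < AF)
    (L : ℝ → (C(X, ℝ) →L[ℝ] C(X, ℝ)))
    (hL : ∀ (t : ℝ) (g : C(X, ℝ)) (x : X),
      L t g x = ∑' y : (φ ⁻¹' {x} : Set X), Real.exp (-t * F y) * g y) :
    Tendsto (fun t => (spectralRadius ℝ (L t)).toReal) atTop (nhds 0) :=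
  spectralRadius_transfer_tendsto_zero_general φ hfin F AF hAF hpos L hL
end

section
/- Let X be a compact metric space, φ : X → X continuous surjective locally injective, {b_i}_{i=1}^k a partition of unity in C(X) with φ injective on supp b_i for each i, and m(x) = #φ^{-1}(φ(x)). Then for every f in the C*-algebra D (a unital commutative C*-algebra of bounded functions containing C(X), m, and closed under α(g)=g∘φ and the transfer operator 𝓛), one has f = ∑_{i=1}^k (b_i m)^{1/2} · α(𝓛((b_i m)^{1/2} f)); i.e. {(b_i m)^{1/2}} is a quasi-basis for the conditional expectation α∘𝓛 of D onto α(D). -/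
/-!
Because `φ` is injective on `supp b_i`, in the fibre `φ⁻¹(φ x)` only `z = x` contributes to
`𝓛((b_i m)^{1/2} f)(φ x)`, so the `i`-th summand collapses to `N(φ x)⁻¹ · b_i(x) m(x) f(x)`
`= b_i(x) f(x)`; summing the partition of unity gives `f x`.
-/

open Finset

theorem mul_tsum_preimage_singleton_of_injOn_support {α β R : Type*} [Semiring R]
    [TopologicalSpace R] {φ : α → β} {u : α → R} (hu : Set.InjOn φ (Function.support u))
    (g : α → R) (x : α) :
    u x * ∑' z : φ ⁻¹' {φ x}, u z * g z = u x * u x * g x := by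
  by_cases hx : u x = 0
  · simp [hx]
  rw [tsum_eq_single ⟨x, rfl⟩, mul_assoc]
  intro z hzx
  have hz : u z = 0 := by
    by_contra hz
    exact hzx (Subtype.ext (hu hz hx z.2))
  rw [hz, zero_mul]

theorem support_sqrt_mul_subset_left {α : Type*} (b m : α → ℝ) :
    Function.support (fun y => √(b y * m y)) ⊆ Function.support b := fun _ hy hb =>
  hy (by simp [hb])

theorem quasi_basis_identity_general {X : Type*} [MetricSpace X]
    (φ : X → X)
    (hfin : ∀ x : X, (φ ⁻¹' {x}).Finite)
    (k : ℕ) (b : Fin k → C(X, ℝ))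
    (hb0 : ∀ i, ∀ x, 0 ≤ b i x)
    (hb1 : ∀ x, ∑ i, b i x = 1)
    (hbinj : ∀ i, Set.InjOn φ (tsupport (b i)))
    (N : X → ℝ) (hN : ∀ x, N x = (Nat.card (φ ⁻¹' {x}) : ℝ))
    (m : X → ℝ) (hm : ∀ x, m x = N (φ x))
    (𝓛 : (X → ℝ) → (X → ℝ))
    (h𝓛 : ∀ (f : X → ℝ) (x : X),
      𝓛 f x = (N x)⁻¹ * ∑' z : (φ ⁻¹' {x} : Set X), f z)
    (f : X → ℝ) :
    ∀ x : X, f x =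
      ∑ i, Real.sqrt (b i x * m x) *
        (𝓛 (fun y => Real.sqrt (b i y * m y) * f y)) (φ x) := by
  intro x
  have hNx : N (φ x) ≠ 0 := by
    have : Finite (φ ⁻¹' {φ x}) := (hfin (φ x)).to_subtype
    have : Nonempty (φ ⁻¹' {φ x}) := ⟨⟨x, rfl⟩⟩
    rw [hN]
    exact_mod_cast Nat.card_pos.ne'
  have hmx : 0 ≤ m x := by rw [hm, hN]; positivity
  have hterm : ∀ i, √(b i x * m x) * 𝓛 (fun y => √(b i y * m y) * f y) (φ x)
      = (N (φ x))⁻¹ * (b i x * m x * f x) := by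
    intro i
    have hinj : Set.InjOn φ (Function.support fun y => √(b i y * m y)) :=
      (hbinj i).mono ((support_sqrt_mul_subset_left _ m).trans (subset_tsupport _))
    rw [h𝓛, mul_left_comm, mul_tsum_preimage_singleton_of_injOn_support hinj f x,
      Real.mul_self_sqrt (mul_nonneg (hb0 i x) hmx)]
  rw [sum_congr rfl fun i _ => hterm i, ← mul_sum, ← sum_mul, ← sum_mul, hb1, one_mul, hm,
    inv_mul_cancel_left₀ hNx]

/-- Quasi-basis identity: with a partition of unity `{b_i}` such that `φ` is injective on
each `supp b_i`, and `m(x) = #φ⁻¹(φ(x))`, every `f ∈ D` satisfies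
`f = ∑_i (b_i m)^{1/2} · α(𝓛((b_i m)^{1/2} f))` pointwise, where `α(g) = g ∘ φ` and
`𝓛` is the transfer operator. -/
theorem quasi_basis_identity {X : Type*} [MetricSpace X] [CompactSpace X]
    (φ : X → X) (hcont : Continuous φ) (hsurj : Function.Surjective φ)
    (hlocinj : ∀ x : X, ∃ U ∈ nhds x, Set.InjOn φ U)
    (hfin : ∀ x : X, (φ ⁻¹' {x}).Finite)
    (k : ℕ) (b : Fin k → C(X, ℝ))
    (hb0 : ∀ i, ∀ x, 0 ≤ b i x)
    (hb1 : ∀ x, ∑ i, b i x = 1)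
    (hbinj : ∀ i, Set.InjOn φ (tsupport (b i)))
    (N : X → ℝ) (hN : ∀ x, N x = (Nat.card (φ ⁻¹' {x}) : ℝ))
    (m : X → ℝ) (hm : ∀ x, m x = N (φ x))
    (𝓛 : (X → ℝ) → (X → ℝ))
    (h𝓛 : ∀ (f : X → ℝ) (x : X),
      𝓛 f x = (N x)⁻¹ * ∑' z : (φ ⁻¹' {x} : Set X), f z)
    (D : Subalgebra ℝ (X → ℝ)) (hC : ∀ g : C(X, ℝ), ⇑g ∈ D)
    (f : X → ℝ) (hf : f ∈ D) :
    ∀ x : X, f x =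
      ∑ i, Real.sqrt (b i x * m x) *
        (𝓛 (fun y => Real.sqrt (b i y * m y) * f y)) (φ x) :=
  quasi_basis_identity_general φ hfin k b hb0 hb1 hbinj N hN m hm 𝓛 h𝓛 f
end

section
/- Let X be a compact metric space, φ : X → X continuous surjective locally injective, D the canonical commutative C*-algebra of the semi-étale groupoid with spectrum \widehat{D}, ι : X → \widehat{D} the evaluation embedding and ψ : \widehat{D} → \widehat{D} the induced map ψ(c)(g) = c(g∘φ). Then ψ^{-1}(ι(X)) = ι(X); more precisely, for each x ∈ X, ψ^{-1}(ι(x)) = {ι(z) : z ∈ φ^{-1}(x)}. -/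
open Filter Topology WeakDual

/-!
A character `c` of `D` with `ψ c = ι x` restricts on `C(X)` to evaluation at some `z`, and testing
against continuous functions gives `φ z = x`. To see that `c` is evaluation at `z` on all of `D`,
localize: choose `f₀ ∈ C(X)` with `f₀ z = 1` supported in a neighbourhood `U` of `z` on which `φ`
is injective. For `g ∈ D` the fiber sum `L` of `g f₀` lies in `D` and satisfies
`f₀ · (L ∘ φ) = f₀ · g f₀`, while `c (L ∘ φ) = L x = g z`; applying `c` to the identity gives
`c g = g z`.
-/

theorem ContinuousMap.exists_algHom_eq_eval {X : Type*} [TopologicalSpace X] [CompactSpace X]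
    [T2Space X] (χ : C(X, ℂ) →ₐ[ℂ] ℂ) : ∃ z, ∀ f : C(X, ℂ), χ f = f z := by
  obtain ⟨z, hz⟩ := (CharacterSpace.continuousMapEval_bijective X ℂ).2
    (CharacterSpace.equivAlgHom.symm χ)
  exact ⟨z, fun f => (DFunLike.congr_fun hz f).symm⟩

theorem ContinuousMap.eq_of_forall_apply_eq {X : Type*} [TopologicalSpace X] [CompactSpace X]
    [T2Space X] {x y : X} (h : ∀ f : C(X, ℂ), f x = f y) : x = y :=
  (CharacterSpace.continuousMapEval_bijective X ℂ).1 (DFunLike.ext _ _ h)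

theorem ContinuousMap.exists_eq_one_support_subset {X : Type*} [TopologicalSpace X]
    [NormalSpace X] [T1Space X] {z : X} {U : Set X} (hU : U ∈ 𝓝 z) :
    ∃ f : C(X, ℂ), f z = 1 ∧ ∀ y, f y ≠ 0 → y ∈ U := by
  obtain ⟨f, hfz, hfU, -⟩ := exists_continuous_zero_one_of_isClosed isClosed_singleton
    isOpen_interior.isClosed_compl
    (Set.disjoint_singleton_left.2 (not_not.2 (mem_interior_iff_mem_nhds.2 hU)))
  refine ⟨(Complex.ofRealCLM : C(ℝ, ℂ)).comp (1 - f), by simp [hfz rfl], fun y hy => ?_⟩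
  by_contra hyU
  exact hy (by simp [hfU fun h => hyU (interior_subset h)])

theorem tsum_preimage_singleton_eq_of_injOn {X M : Type*} [AddCommMonoid M] [TopologicalSpace M]
    {φ : X → X} {U : Set X} (hinj : Set.InjOn φ U) {f : X → M} (hf : ∀ y, f y ≠ 0 → y ∈ U)
    {z : X} (hz : z ∈ U) : ∑' w : (φ ⁻¹' {φ z} : Set X), f w = f z :=
  tsum_eq_single (⟨z, rfl⟩ : (φ ⁻¹' {φ z} : Set X)) fun w hw => by
    by_contra hfw
    exact hw (Subtype.ext (hinj (hf w hfw) hz w.2))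

section Characters

variable {X : Type*} {φ : X → X} {D : StarSubalgebra ℂ (X → ℂ)}
  {F : Type*} [FunLike F D ℂ] [AlgHomClass F ℂ D ℂ]

theorem apply_eq_of_apply_comp_eq_of_injOn (hcomp : ∀ g ∈ D, g ∘ φ ∈ D)
    (hsum : ∀ g ∈ D, (fun x => ∑' z : (φ ⁻¹' {x} : Set X), g z) ∈ D)
    (c : F) {x : X} (hc : ∀ (g : X → ℂ) (hg : g ∈ D), c ⟨g ∘ φ, hcomp g hg⟩ = g x)
    {z : X} (hzx : φ z = x) {U : Set X} (hinj : Set.InjOn φ U) (hzU : z ∈ U)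
    {f₀ : X → ℂ} (hf₀ : f₀ ∈ D) (hf₀z : f₀ z = 1) (hf₀U : ∀ y, f₀ y ≠ 0 → y ∈ U)
    (hcf₀ : c ⟨f₀, hf₀⟩ = 1) (g : X → ℂ) (hg : g ∈ D) : c ⟨g, hg⟩ = g z := by
  set L : X → ℂ := fun x => ∑' w : (φ ⁻¹' {x} : Set X), g w * f₀ w
  have hL : L ∈ D := hsum _ (mul_mem hg hf₀)
  have hgf₀U : ∀ y, g y * f₀ y ≠ 0 → y ∈ U := fun y hy => hf₀U y (right_ne_zero_of_mul hy)
  have hlocal : (⟨f₀, hf₀⟩ * ⟨L ∘ φ, hcomp L hL⟩ : D) = ⟨f₀, hf₀⟩ * (⟨g, hg⟩ * ⟨f₀, hf₀⟩) := by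
    refine Subtype.ext (funext fun y => ?_)
    by_cases hy : f₀ y = 0
    · simp [hy]
    · exact congrArg (f₀ y * ·) (tsum_preimage_singleton_eq_of_injOn hinj hgf₀U (hf₀U y hy))
  have hcL : c ⟨L ∘ φ, hcomp L hL⟩ = g z := by
    rw [hc L hL, ← hzx]
    simp [L, tsum_preimage_singleton_eq_of_injOn hinj hgf₀U hzU, hf₀z]
  have := congrArg c hlocal
  rwa [map_mul, map_mul, map_mul, hcf₀, hcL, one_mul, one_mul, mul_one, eq_comm] at this

theorem exists_apply_eq_of_apply_comp_eq [TopologicalSpace X] [CompactSpace X] [T2Space X]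
    (hcont : Continuous φ) (hlocinj : ∀ x : X, ∃ U ∈ 𝓝 x, Set.InjOn φ U)
    (hC : ∀ f : C(X, ℂ), ⇑f ∈ D) (hcomp : ∀ g ∈ D, g ∘ φ ∈ D)
    (hsum : ∀ g ∈ D, (fun x => ∑' z : (φ ⁻¹' {x} : Set X), g z) ∈ D)
    (c : F) {x : X} (hc : ∀ (g : X → ℂ) (hg : g ∈ D), c ⟨g ∘ φ, hcomp g hg⟩ = g x) :
    ∃ z, φ z = x ∧ ∀ (g : X → ℂ) (hg : g ∈ D), c ⟨g, hg⟩ = g z := by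
  obtain ⟨z, hz⟩ := ContinuousMap.exists_algHom_eq_eval
    ((AlgHomClass.toAlgHom c).comp ((ContinuousMap.coeFnAlgHom ℂ).codRestrict D.toSubalgebra hC))
  have hzx : φ z = x := ContinuousMap.eq_of_forall_apply_eq fun f =>
    (hz (f.comp ⟨φ, hcont⟩)).symm.trans (hc f (hC f))
  obtain ⟨U, hU, hinj⟩ := hlocinj z
  obtain ⟨f₀, hf₀z, hf₀U⟩ := ContinuousMap.exists_eq_one_support_subset hU
  exact ⟨z, hzx, apply_eq_of_apply_comp_eq_of_injOn hcomp hsum c hc hzx hinj (mem_of_mem_nhds hU)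
    (hC f₀) hf₀z hf₀U ((hz f₀).trans hf₀z)⟩

end Characters

theorem preimage_of_evaluation_characters_general {X : Type*} [MetricSpace X] [CompactSpace X]
    (φ : X → X) (hcont : Continuous φ)
    (hlocinj : ∀ x : X, ∃ U ∈ nhds x, Set.InjOn φ U)
    (D : StarSubalgebra ℂ (X → ℂ))
    (hC : ∀ f : C(X, ℂ), ⇑f ∈ D)
    (hcomp : ∀ g ∈ D, g ∘ φ ∈ D)
    (hsum : ∀ g ∈ D, (fun x => ∑' z : (φ ⁻¹' {x} : Set X), g z) ∈ D)
    (ι : X → (D →⋆ₐ[ℂ] ℂ))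
    (hι : ∀ (x : X) (g : X → ℂ) (hg : g ∈ D), ι x ⟨g, hg⟩ = g x)
    (ψ : (D →⋆ₐ[ℂ] ℂ) → (D →⋆ₐ[ℂ] ℂ))
    (hψ : ∀ (c : D →⋆ₐ[ℂ] ℂ) (g : X → ℂ) (hg : g ∈ D),
      ψ c ⟨g, hg⟩ = c ⟨g ∘ φ, hcomp g hg⟩) :
    (∀ x : X, ψ ⁻¹' {ι x} = ι '' (φ ⁻¹' {x})) ∧
    ψ ⁻¹' (Set.range ι) = Set.range ι := by
  have hψι : ∀ z, ψ (ι z) = ι (φ z) := fun z =>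
    StarAlgHom.ext fun ⟨g, hg⟩ => by rw [hψ, hι, hι]; rfl
  have hfiber : ∀ x c, ψ c = ι x → ∃ z, φ z = x ∧ ι z = c := fun x c hcx => by
    obtain ⟨z, hzx, hz⟩ := exists_apply_eq_of_apply_comp_eq hcont hlocinj hC hcomp hsum c
      fun g hg => by rw [← hψ c g hg, hcx, hι]
    exact ⟨z, hzx, StarAlgHom.ext fun ⟨g, hg⟩ => (hι z g hg).trans (hz g hg).symm⟩
  refine ⟨fun x => Set.ext fun c => ⟨hfiber x c, ?_⟩, Set.ext fun c => ⟨?_, ?_⟩⟩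
  · rintro ⟨z, rfl, rfl⟩
    exact hψι z
  · rintro ⟨x, hx⟩
    obtain ⟨z, -, hz⟩ := hfiber x c hx.symm
    exact ⟨z, hz⟩
  · rintro ⟨z, rfl⟩
    exact ⟨φ z, (hψι z).symm⟩

/-- Let `D` be the canonical commutative C*-algebra of bounded functions associated with a
locally injective surjection `φ` (it contains `C(X)`, is uniformly closed, and is closed
under `g ↦ g ∘ φ` and the fiber-sum operation).  For the induced map `ψ(c)(g) = c(g ∘ φ)`
on characters and the evaluation embedding `ι`, one has `ψ⁻¹(ι(X)) = ι(X)`; more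
precisely `ψ⁻¹(ι x) = {ι z : z ∈ φ⁻¹(x)}` for each `x`. -/
theorem preimage_of_evaluation_characters {X : Type*} [MetricSpace X] [CompactSpace X]
    (φ : X → X) (hcont : Continuous φ) (hsurj : Function.Surjective φ)
    (hlocinj : ∀ x : X, ∃ U ∈ nhds x, Set.InjOn φ U)
    (hfin : ∀ x : X, (φ ⁻¹' {x}).Finite)
    (D : StarSubalgebra ℂ (X → ℂ))
    (hbdd : ∀ g ∈ D, ∃ M : ℝ, ∀ x, ‖g x‖ ≤ M)
    (hC : ∀ f : C(X, ℂ), ⇑f ∈ D)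
    (hcomp : ∀ g ∈ D, g ∘ φ ∈ D)
    (hsum : ∀ g ∈ D, (fun x => ∑' z : (φ ⁻¹' {x} : Set X), g z) ∈ D)
    (hclosed : ∀ (g : ℕ → X → ℂ) (h : X → ℂ), (∀ n, g n ∈ D) →
      TendstoUniformly g h atTop → h ∈ D)
    (ι : X → (D →⋆ₐ[ℂ] ℂ))
    (hι : ∀ (x : X) (g : X → ℂ) (hg : g ∈ D), ι x ⟨g, hg⟩ = g x)
    (ψ : (D →⋆ₐ[ℂ] ℂ) → (D →⋆ₐ[ℂ] ℂ))
    (hψ : ∀ (c : D →⋆ₐ[ℂ] ℂ) (g : X → ℂ) (hg : g ∈ D),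
      ψ c ⟨g, hg⟩ = c ⟨g ∘ φ, hcomp g hg⟩) :
    (∀ x : X, ψ ⁻¹' {ι x} = ι '' (φ ⁻¹' {x})) ∧
    ψ ⁻¹' (Set.range ι) = Set.range ι :=
  preimage_of_evaluation_characters_general φ hcont hlocinj D hC hcomp hsum ι hι ψ hψ
end
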